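/- Fix an r-dimensional subspace M of V ∩ S, where V, S ≤ F_q^n with dim S = s and dim(S ∩ V) = ℓ. The number of N-dimensional subspaces U of S with U ∩ V = M equals q^{(ℓ−r)(N−r)} · [s−ℓ choose N−r]_q. -/
import Mathlib


open Finset

/-- The Gaussian binomial coefficient `[a choose b]_q`, counting `b`-dimensional
subspaces of an `a`-dimensional vector space over `F_q`; it is `0` if `a < b`. -/
def gaussBinom (q a b : ℕ) : ℕ :=
  if b ≤ a then
    (∏ j ∈ Finset.range b, (q ^ a - q ^ j)) / (∏ j ∈ Finset.range b, (q ^ b - q ^ j))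
  else 0

/-- Gaussian binomial with integer lower argument (zero for negative arguments). -/
def gaussBinomZ (q a : ℕ) (b : ℤ) : ℕ :=
  if 0 ≤ b then gaussBinom q a b.toNat else 0

open Module Submodule

set_option maxHeartbeats 1000000
set_option synthInstance.maxHeartbeats 400000

section Aux

variable {F E : Type*} [Field F] [Fintype F] [AddCommGroup E] [Module F E]
  [FiniteDimensional F E]

lemma aux_nat_card_sigma {ι : Type*} [Fintype ι] (f : ι → Type*) [∀ i, Finite (f i)] :
    Nat.card (Σ i, f i) = ∑ i, Nat.card (f i) := by
  classical
  haveI := fun i => Fintype.ofFinite (f i)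
  simp [Nat.card_eq_fintype_card, Fintype.card_sigma]

/-- Rank of the image of a submodule containing `M` in the quotient by `M`. -/
lemma finrank_map_mkQ_add {M U : Submodule F E} (h : M ≤ U) :
    Module.finrank F (U.map M.mkQ) + Module.finrank F M = Module.finrank F U := by
  have h1 := LinearMap.finrank_range_add_finrank_ker (M.mkQ.domRestrict U)
  rw [LinearMap.range_domRestrict] at h1
  have h2 : LinearMap.ker (M.mkQ.domRestrict U) = comap U.subtype M := by
    ext x
    simp [LinearMap.mem_ker, Submodule.Quotient.mk_eq_zero]
  rw [h2, (Submodule.comapSubtypeEquivOfLe h).finrank_eq] at h1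
  exact h1

variable [Finite E]

/-- Cardinality of the fiber of the "span" map over a fixed `m`-dimensional `U` with
`U ⊓ W = ⊥`. -/
lemma aux_fiber_card (W : Submodule F E) (m : ℕ) (U : Submodule F E)
    (hU : Module.finrank F U = m) (hUW : U ⊓ W = ⊥) :
    Nat.card {s : {s : Fin m → E // LinearIndependent F (⇑W.mkQ ∘ s)} //
        Submodule.span F (Set.range s.1) = U}
      = ∏ i ∈ Finset.range m, (Fintype.card F ^ m - Fintype.card F ^ i) := by
  have hker : LinearMap.ker (W.mkQ ∘ₗ U.subtype) = ⊥ := by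
    rw [LinearMap.ker_comp, Submodule.ker_mkQ, eq_bot_iff]
    rintro ⟨x, hxU⟩ hx
    have : x ∈ U ⊓ W := ⟨hxU, hx⟩
    rw [hUW] at this
    exact Subtype.ext this
  have e : {s : {s : Fin m → E // LinearIndependent F (⇑W.mkQ ∘ s)} //
        Submodule.span F (Set.range s.1) = U} ≃ {b : Fin m → U // LinearIndependent F b} := by
    refine ⟨fun s => ⟨fun i => ⟨s.1.1 i,
        le_of_eq s.2 (Submodule.subset_span (Set.mem_range_self i))⟩, ?_⟩,
      fun b => ⟨⟨⇑U.subtype ∘ b.1, ?_⟩, ?_⟩, ?_, ?_⟩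
    · exact LinearIndependent.of_comp U.subtype
        (show LinearIndependent F s.1.1 from LinearIndependent.of_comp W.mkQ s.1.2)
    · exact (show LinearIndependent F (⇑(W.mkQ ∘ₗ U.subtype) ∘ b.1) from b.2.map' _ hker)
    · have hb : Submodule.span F (Set.range b.1) = ⊤ :=
        Submodule.eq_top_of_finrank_eq
          (by rw [finrank_span_eq_card b.2, Fintype.card_fin, hU])
      rw [Set.range_comp, Submodule.span_image, hb, Submodule.map_subtype_top]
    · intro s
      exact Subtype.ext (Subtype.ext rfl)
    · intro b
      exact Subtype.ext rfl
  rw [Nat.card_congr e, card_linearIndependent (k := m) hU.ge, hU,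
    Fin.prod_univ_eq_prod_range (fun i => Fintype.card F ^ m - Fintype.card F ^ i) m]

/-- Counting tuples that are independent modulo `W`, by picking cosets. -/
lemma aux_card_T (W : Submodule F E) (m : ℕ)
    (hm : m + Module.finrank F W ≤ Module.finrank F E) :
    Nat.card {s : Fin m → E // LinearIndependent F (⇑W.mkQ ∘ s)}
      = Fintype.card F ^ (Module.finrank F W * m)
        * ∏ i ∈ Finset.range m,
            (Fintype.card F ^ (Module.finrank F E - Module.finrank F W) - Fintype.card F ^ i) := by
  classical
  haveI : Finite (E ⧸ W) := Finite.of_surjective _ (Submodule.mkQ_surjective W)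
  obtain ⟨σ, hσ⟩ := W.mkQ.exists_rightInverse_of_surjective (Submodule.range_mkQ W)
  have hσ' : ∀ x : E ⧸ W, Submodule.Quotient.mk (σ x) = x := fun x => by
    have h := LinearMap.congr_fun hσ x
    simpa [Submodule.mkQ_apply] using h
  have hquot : Module.finrank F (E ⧸ W) = Module.finrank F E - Module.finrank F W := by
    have := Submodule.finrank_quotient_add_finrank W
    omega
  have e : {s : Fin m → E // LinearIndependent F (⇑W.mkQ ∘ s)}
      ≃ {t : Fin m → E ⧸ W // LinearIndependent F t} × (Fin m → W) := by
    refine ⟨fun s => (⟨⇑W.mkQ ∘ s.1, s.2⟩, fun i => ⟨s.1 i - σ (W.mkQ (s.1 i)), ?_⟩),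
      fun p => ⟨fun i => σ (p.1.1 i) + (p.2 i : E), ?_⟩, ?_, ?_⟩
    · rw [← Submodule.Quotient.mk_eq_zero W]
      simp [Submodule.Quotient.mk_sub, Submodule.mkQ_apply, hσ']
    · have : (⇑W.mkQ ∘ fun i => σ (p.1.1 i) + (p.2 i : E)) = p.1.1 := by
        funext i
        simp [hσ', (Submodule.Quotient.mk_eq_zero W).2 (p.2 i).2]
      rw [this]
      exact p.1.2
    · intro s
      refine Subtype.ext (funext fun i => ?_)
      simp
    · rintro ⟨t, w⟩
      refine Prod.ext (Subtype.ext (funext fun i => ?_)) (funext fun i => Subtype.ext ?_)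
      · simp [Submodule.mkQ_apply, Submodule.Quotient.mk_add, hσ',
          (Submodule.Quotient.mk_eq_zero W).2 (w i).2]
      · have h1 : Submodule.Quotient.mk (p := W) (σ (t.1 i) + (w i : E)) = t.1 i := by
          simp [Submodule.Quotient.mk_add, hσ',
            (Submodule.Quotient.mk_eq_zero W).2 (w i).2]
        simp only [Submodule.mkQ_apply, h1]
        abel
  rw [Nat.card_congr e, Nat.card_prod, Nat.card_fun,
    card_linearIndependent (k := m) (by omega : m ≤ Module.finrank F (E ⧸ W))]
  haveI : Fintype W := Fintype.ofFinite _
  rw [Nat.card_eq_fintype_card (α := W), card_eq_pow_finrank (K := F) (V := W),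
    Nat.card_eq_fintype_card (α := Fin m), Fintype.card_fin, hquot,
    Fin.prod_univ_eq_prod_range
      (fun i => Fintype.card F ^ (Module.finrank F E - Module.finrank F W) - Fintype.card F ^ i) m,
    ← pow_mul]
  ring

/-- Key double counting identity. -/
lemma aux_count_key (W : Submodule F E) (m : ℕ)
    (hm : m + Module.finrank F W ≤ Module.finrank F E) :
    Nat.card {U : Submodule F E // Module.finrank F U = m ∧ U ⊓ W = ⊥}
        * ∏ i ∈ Finset.range m, (Fintype.card F ^ m - Fintype.card F ^ i)
      = Fintype.card F ^ (Module.finrank F W * m)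
        * ∏ i ∈ Finset.range m,
            (Fintype.card F ^ (Module.finrank F E - Module.finrank F W) - Fintype.card F ^ i) := by
  classical
  haveI : Finite (Submodule F E) := Finite.of_injective _ SetLike.coe_injective
  set A := {U : Submodule F E // Module.finrank F U = m ∧ U ⊓ W = ⊥} with hA
  set T := {s : Fin m → E // LinearIndependent F (⇑W.mkQ ∘ s)} with hT
  haveI : Fintype A := Fintype.ofFinite _
  -- the span map
  have hspan : ∀ s : T, Module.finrank F (Submodule.span F (Set.range s.1)) = m ∧
      Submodule.span F (Set.range s.1) ⊓ W = ⊥ := by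
    intro s
    have hLI : LinearIndependent F s.1 := LinearIndependent.of_comp W.mkQ s.2
    constructor
    · rw [finrank_span_eq_card hLI, Fintype.card_fin]
    · rw [eq_bot_iff]
      rintro x ⟨hx1, hx2⟩
      obtain ⟨c, rfl⟩ := (mem_span_range_iff_exists_fun F).1 hx1
      have h0 : ∑ i, c i • W.mkQ (s.1 i) = 0 := by
        have h00 : W.mkQ (∑ i, c i • s.1 i) = 0 := by
          rw [Submodule.mkQ_apply]
          exact (Submodule.Quotient.mk_eq_zero W).2 hx2
        rw [← h00, map_sum]
        simp only [map_smul]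
      have hc : ∀ i, c i = 0 := fun i =>
        Fintype.linearIndependent_iff.1 s.2 c h0 i
      simp [hc]
  let Φ : T → A := fun s => ⟨Submodule.span F (Set.range s.1), hspan s⟩
  have h1 : Nat.card T = ∑ U : A, Nat.card {s : T // Φ s = U} := by
    rw [← Nat.card_congr (Equiv.sigmaFiberEquiv Φ), aux_nat_card_sigma]
  have h2 : ∀ U : A, Nat.card {s : T // Φ s = U}
      = ∏ i ∈ Finset.range m, (Fintype.card F ^ m - Fintype.card F ^ i) := by
    intro U
    rw [Nat.card_congr (Equiv.subtypeEquivRight (fun s =>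
      (Subtype.ext_iff : Φ s = U ↔ Submodule.span F (Set.range s.1) = U.1)))]
    exact aux_fiber_card W m U.1 U.2.1 U.2.2
  rw [← aux_card_T W m hm, h1, Finset.sum_congr rfl (fun U _ => h2 U), Finset.sum_const,
    Finset.card_univ, smul_eq_mul, Nat.card_eq_fintype_card]

lemma prod_pos (m : ℕ) :
    0 < ∏ i ∈ Finset.range m, (Fintype.card F ^ m - Fintype.card F ^ i) := by
  have hq : 1 < Fintype.card F := Fintype.one_lt_card
  apply Finset.prod_pos
  intro i hi
  have h2 : Fintype.card F ^ i < Fintype.card F ^ m :=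
    Nat.pow_lt_pow_right hq (Finset.mem_range.1 hi)
  omega

/-- Counting `m`-dimensional subspaces meeting a fixed subspace `W` trivially. -/
lemma aux_count_complement (W : Submodule F E) (m : ℕ) :
    Nat.card {U : Submodule F E // Module.finrank F U = m ∧ U ⊓ W = ⊥}
      = Fintype.card F ^ (Module.finrank F W * m)
        * gaussBinom (Fintype.card F) (Module.finrank F E - Module.finrank F W) m := by
  classical
  have hq : 1 < Fintype.card F := Fintype.one_lt_card
  have hWle : Module.finrank F W ≤ Module.finrank F E := Submodule.finrank_le W
  by_cases hm : m + Module.finrank F W ≤ Module.finrank F E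
  · haveI : Finite (E ⧸ W) := Finite.of_surjective _ (Submodule.mkQ_surjective W)
    have hquot : Module.finrank F (E ⧸ W) = Module.finrank F E - Module.finrank F W := by
      have := Submodule.finrank_quotient_add_finrank W
      omega
    have key := aux_count_key W m hm
    have key2 := aux_count_key (E := E ⧸ W) ⊥ m
      (by rw [finrank_bot F (E ⧸ W), hquot]; omega)
    rw [finrank_bot F (E ⧸ W), hquot, Nat.zero_mul, pow_zero, one_mul, Nat.sub_zero] at key2
    -- key2 : card2 * Q = P
    have hgauss : gaussBinom (Fintype.card F) (Module.finrank F E - Module.finrank F W) m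
        = Nat.card {U : Submodule F (E ⧸ W) // Module.finrank F U = m ∧ U ⊓ ⊥ = ⊥} := by
      rw [gaussBinom, if_pos (by omega), ← key2,
        Nat.mul_div_cancel _ (prod_pos (F := F) m)]
    rw [hgauss]
    apply Nat.eq_of_mul_eq_mul_right (prod_pos (F := F) m)
    rw [key, ← key2]
    ring
  · have hempty : IsEmpty {U : Submodule F E // Module.finrank F U = m ∧ U ⊓ W = ⊥} := by
      constructor
      rintro ⟨U, hU, hUW⟩
      have h1 := Submodule.finrank_sup_add_finrank_inf_eq U W
      have h2 : Module.finrank F ↥(U ⊔ W) ≤ Module.finrank F E := Submodule.finrank_le _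
      rw [hUW, hU, finrank_bot] at h1
      omega
    rw [Nat.card_of_isEmpty, gaussBinom, if_neg (by omega), mul_zero]

/-- The quotient step: subspaces with `U ⊓ W = M` correspond to subspaces of `E ⧸ M`
meeting the image of `W` trivially. -/
lemma aux_quotient_step (W M : Submodule F E) (hMW : M ≤ W) (N : ℕ)
    (hrN : Module.finrank F M ≤ N) :
    Nat.card {U : Submodule F E // Module.finrank F U = N ∧ U ⊓ W = M}
      = Nat.card {U : Submodule F (E ⧸ M) //
          Module.finrank F U = N - Module.finrank F M ∧ U ⊓ W.map M.mkQ = ⊥} := by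
  apply Nat.card_congr
  refine ⟨fun U => ⟨U.1.map M.mkQ, ?_, ?_⟩, fun U => ⟨comap M.mkQ U.1, ?_, ?_⟩, ?_, ?_⟩
  · -- rank
    have hMU : M ≤ U.1 := U.2.2.ge.trans inf_le_left
    have := finrank_map_mkQ_add hMU
    rw [U.2.1] at this
    omega
  · -- intersection trivial
    rw [eq_bot_iff]
    rintro x ⟨hx1, hx2⟩
    obtain ⟨u, hu, rfl⟩ := Submodule.mem_map.1 hx1
    obtain ⟨w, hw, hwu⟩ := Submodule.mem_map.1 hx2
    have huw : w - u ∈ M := by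
      rw [← Submodule.Quotient.eq M]
      exact hwu
    have huU : u ∈ U.1 ⊓ W := by
      refine ⟨hu, ?_⟩
      have : u = w - (w - u) := by abel
      rw [this]
      exact W.sub_mem hw (hMW huw)
    rw [U.2.2] at huU
    simp [Submodule.mkQ_apply, (Submodule.Quotient.mk_eq_zero M).2 huU]
  · -- rank of comap
    have hMU : M ≤ comap M.mkQ U.1 := fun x hx => by
      simp [Submodule.mkQ_apply, (Submodule.Quotient.mk_eq_zero M).2 hx]
    have := finrank_map_mkQ_add hMU
    rw [Submodule.map_comap_eq_of_surjective (Submodule.mkQ_surjective M), U.2.1] at this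
    omega
  · -- intersection equals M
    apply le_antisymm
    · rintro x ⟨hx1, hx2⟩
      have : M.mkQ x ∈ U.1 ⊓ W.map M.mkQ :=
        ⟨hx1, Submodule.mem_map.2 ⟨x, hx2, rfl⟩⟩
      rw [U.2.2] at this
      rwa [Submodule.mem_bot, Submodule.mkQ_apply, Submodule.Quotient.mk_eq_zero] at this
    · refine le_inf (fun x hx => ?_) hMW
      simp [Submodule.mkQ_apply, (Submodule.Quotient.mk_eq_zero M).2 hx]
  · -- left inverse
    intro U
    have hMU : M ≤ U.1 := U.2.2.ge.trans inf_le_left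
    refine Subtype.ext ?_
    show comap M.mkQ (Submodule.map M.mkQ U.1) = U.1
    rw [Submodule.comap_map_mkQ, sup_eq_right.2 hMU]
  · -- right inverse
    intro U
    refine Subtype.ext ?_
    show Submodule.map M.mkQ (comap M.mkQ U.1) = U.1
    exact Submodule.map_comap_eq_of_surjective (Submodule.mkQ_surjective M) U.1

end Aux

/-- for a fixed `r`-dimensional subspace `M ≤ V ⊓ S`, with `dim S = s`
and `dim (V ⊓ S) = ℓ`, the number of `N`-dimensional subspaces `U ≤ S` with
`U ⊓ V = M` equals `q^{(ℓ-r)(N-r)} [s-ℓ, N-r]_q`. -/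
theorem count_subspaces_meeting_V_in_M
    (F : Type*) [Field F] [Fintype F]
    (n s ℓ r N : ℕ)
    (V S M : Submodule F (Fin n → F)) (hM : M ≤ V ⊓ S)
    (hr : Module.finrank F M = r)
    (hs : Module.finrank F S = s) (hℓ : Module.finrank F ↥(V ⊓ S) = ℓ) :
    Nat.card {U : Submodule F (Fin n → F) // U ≤ S ∧ Module.finrank F U = N ∧ U ⊓ V = M}
      = Fintype.card F ^ ((ℓ - r) * (N - r))
          * gaussBinomZ (Fintype.card F) (s - ℓ) ((N : ℤ) - (r : ℤ)) := by
  classical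
  have hMS : M ≤ S := hM.trans inf_le_right
  have hrℓ : r ≤ ℓ := by
    rw [← hr, ← hℓ]; exact Submodule.finrank_mono hM
  have hℓs : ℓ ≤ s := by
    rw [← hℓ, ← hs]
    exact Submodule.finrank_mono inf_le_right
  rcases lt_or_ge N r with hNr | hNr
  · -- empty case
    have hempty : IsEmpty
        {U : Submodule F (Fin n → F) // U ≤ S ∧ Module.finrank F U = N ∧ U ⊓ V = M} := by
      constructor
      rintro ⟨U, hUS, hUN, hUV⟩
      have hMU : M ≤ U := by rw [← hUV]; exact inf_le_left
      have := Submodule.finrank_mono hMU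
      omega
    rw [Nat.card_of_isEmpty, gaussBinomZ, if_neg (by omega), mul_zero]
  · -- main case
    set W₀ : Submodule F S := (V ⊓ S).comap S.subtype with hW₀
    set M₀ : Submodule F S := M.comap S.subtype with hM₀
    have hrankW₀ : Module.finrank F W₀ = ℓ := by
      rw [(Submodule.comapSubtypeEquivOfLe (inf_le_right : V ⊓ S ≤ S)).finrank_eq, hℓ]
    have hrankM₀ : Module.finrank F M₀ = r := by
      rw [(Submodule.comapSubtypeEquivOfLe hMS).finrank_eq, hr]
    have hM₀W₀ : M₀ ≤ W₀ := Submodule.comap_mono hM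
    -- step 1 : transfer into S
    have e1 : {U : Submodule F (Fin n → F) // U ≤ S ∧ Module.finrank F U = N ∧ U ⊓ V = M}
        ≃ {U' : Submodule F S // Module.finrank F U' = N ∧ U' ⊓ W₀ = M₀} := by
      have hinj : Function.Injective ⇑S.subtype := Subtype.val_injective
      have hmapW₀ : W₀.map S.subtype = V ⊓ S := by
        rw [hW₀, Submodule.map_comap_subtype, inf_eq_right.2 (inf_le_right : V ⊓ S ≤ S)]
      have hmapM₀ : M₀.map S.subtype = M := by
        rw [hM₀, Submodule.map_comap_subtype, inf_eq_right.2 hMS]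
      refine ⟨fun U => ⟨U.1.comap S.subtype, ?_, ?_⟩,
        fun U' => ⟨U'.1.map S.subtype, Submodule.map_subtype_le S U'.1, ?_, ?_⟩, ?_, ?_⟩
      · rw [(Submodule.comapSubtypeEquivOfLe U.2.1).finrank_eq, U.2.2.1]
      · rw [hW₀, hM₀, ← Submodule.comap_inf]
        congr 1
        rw [show U.1 ⊓ (V ⊓ S) = (U.1 ⊓ S) ⊓ V by rw [inf_assoc, inf_comm V S, ← inf_assoc] ,
          inf_eq_left.2 U.2.1, U.2.2.2]
      · rw [Submodule.finrank_map_subtype_eq, U'.2.1]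
      · have h1 : U'.1.map S.subtype ⊓ V = U'.1.map S.subtype ⊓ (V ⊓ S) := by
          rw [show U'.1.map S.subtype ⊓ (V ⊓ S) = (U'.1.map S.subtype ⊓ S) ⊓ V by
            rw [inf_assoc, inf_comm V S, ← inf_assoc],
            inf_eq_left.2 (Submodule.map_subtype_le S U'.1)]
        rw [h1, ← hmapW₀, ← Submodule.map_inf S.subtype hinj, U'.2.2, hmapM₀]
      · intro U
        refine Subtype.ext ?_
        show Submodule.map S.subtype (comap S.subtype U.1) = U.1
        rw [Submodule.map_comap_subtype, inf_eq_right.2 U.2.1]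
      · intro U'
        refine Subtype.ext ?_
        show comap S.subtype (Submodule.map S.subtype U'.1) = U'.1
        rw [Submodule.comap_map_eq, Submodule.ker_subtype, sup_bot_eq]
    rw [Nat.card_congr e1]
    haveI : Finite (Fin n → F) := inferInstance
    haveI : Finite S := inferInstance
    -- step 2 : quotient by M₀
    rw [aux_quotient_step W₀ M₀ hM₀W₀ N (by rw [hrankM₀]; exact hNr)]
    haveI : Finite (↥S ⧸ M₀) := Finite.of_surjective _ (Submodule.mkQ_surjective M₀)
    -- step 3 : the complement count
    rw [aux_count_complement (W₀.map M₀.mkQ) (N - Module.finrank F M₀)]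
    have hquot : Module.finrank F (↥S ⧸ M₀) = s - r := by
      have h := Submodule.finrank_quotient_add_finrank M₀
      rw [hrankM₀, hs] at h
      omega
    have hrankWq : Module.finrank F (W₀.map M₀.mkQ) = ℓ - r := by
      have := finrank_map_mkQ_add hM₀W₀
      rw [hrankM₀, hrankW₀] at this
      omega
    rw [hrankM₀, hrankWq, hquot, gaussBinomZ, if_pos (by omega),
      show ((N : ℤ) - (r : ℤ)).toNat = N - r by omega,
      show s - r - (ℓ - r) = s - ℓ by omega]
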